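/- Two Gauss codes w and w' on n letters are unorientedly equivalent if and only if there exists an integer k ≥ 0 such that proj^LP(w') = (shift^LP)^k(proj^LP(w)) or proj^LP(w') = (shift^LP)^k(rev^LP(proj^LP(w))). -/

import Mathlib

/-- A Gauss code on `n` letters: a bijection from the `2*n` positions to
letters paired with a side (`false` = L, `true` = R). -/
abbrev GaussCode (n : ℕ) := Fin (2 * n) ≃ Fin n × Bool

instance (n : ℕ) [NeZero n] : NeZero (2 * n) := ⟨by have := NeZero.ne n; omega⟩

namespace GaussCode

variable {n : ℕ}

/-- `π_*(w)`: relabel the letters by the permutation `π`. -/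
def permAct (π : Equiv.Perm (Fin n)) (w : GaussCode n) : GaussCode n :=
  w.trans (π.prodCongr (Equiv.refl Bool))

open Fin.NatCast in
/-- `shift[m](w)`: the code whose entry at position `i` is the entry of `w` at
position `i + m` (mod `2n`). -/
def shift [NeZero n] (m : ℕ) (w : GaussCode n) : GaussCode n :=
  (Equiv.addRight ((m : Fin (2 * n)))).trans w

/-- `rev(w)`: the code whose entry at position `i` is the entry of `w` at
position `2n - 1 - i`. -/
def rev (w : GaussCode n) : GaussCode n :=
  (Fin.revPerm).trans w

/-- A Gauss code is left preferred if its `L`-entries appear in the order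
`(1,L), (2,L), …, (n,L)` and its entry at position `0` is `(1,L)`. -/
def IsLeftPreferred [NeZero n] (w : GaussCode n) : Prop :=
  StrictMono (fun j : Fin n => w.symm (j, false)) ∧ w 0 = (0, false)

/-- `proj^LP(w)`: relabel letters in the order of appearance of their `L`-entries,
then rotate so that `(1,L)` is at position `0`. -/
def projLP [NeZero n] (w : GaussCode n) : GaussCode n :=
  let π : Equiv.Perm (Fin n) := (Tuple.sort (fun j : Fin n => w.symm (j, false)))⁻¹
  let w' := permAct π w
  shift ((w'.symm ((0 : Fin n), false)).val) w'

/-- `shift^LP(w) := proj^LP(shift[1](w))`. -/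
def shiftLP [NeZero n] (w : GaussCode n) : GaussCode n :=
  projLP (shift 1 w)

/-- `rev^LP(w) := proj^LP(rev(w))`. -/
def revLP [NeZero n] (w : GaussCode n) : GaussCode n :=
  projLP (rev w)

/-- The value of an entry in the order `(1,L) < (1,R) < (2,L) < (2,R) < …`. -/
def entryKey (e : Fin n × Bool) : ℕ :=
  2 * e.1.val + (if e.2 then 1 else 0)

/-- Lexicographic (strict) order on Gauss codes, comparing entries position by
position in the order `(1,L) < (1,R) < (2,L) < (2,R) < …`. -/
def lexLt (w w' : GaussCode n) : Prop :=
  ∃ i : Fin (2 * n), (∀ k, k < i → w k = w' k) ∧ entryKey (w i) < entryKey (w' i)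

/-- Lexicographic order on Gauss codes. -/
def lexLe (w w' : GaussCode n) : Prop :=
  w = w' ∨ lexLt w w'

/-- A left preferred Gauss code is left canonical if it is the smallest element
of its `shift^LP`-orbit `{w, shift^LP(w), …, (shift^LP)^{n-1}(w)}`. -/
def IsLeftCanonical [NeZero n] (w : GaussCode n) : Prop :=
  IsLeftPreferred w ∧ ∀ k < n, lexLe w (shiftLP^[k] w)

/-- `proj^LC(w)`: the smallest element of the `shift^LP`-orbit of `proj^LP(w)`. -/
noncomputable def projLC [NeZero n] (w : GaussCode n) : GaussCode n :=
  letI := Classical.propDecidable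
  if h : ∃ v : GaussCode n, (∃ k < n, v = shiftLP^[k] (projLP w)) ∧
      ∀ k < n, lexLe v (shiftLP^[k] (projLP w))
  then h.choose else projLP w

/-- `rev^LC(w) := proj^LC(rev(w))`. -/
noncomputable def revLC [NeZero n] (w : GaussCode n) : GaussCode n :=
  projLC (rev w)

/-- Oriented equivalence of Gauss codes: `w' = shift[m](π_*(w))` for some
permutation `π` and integer `m`. -/
def OrientedEquiv [NeZero n] (w w' : GaussCode n) : Prop :=
  ∃ (π : Equiv.Perm (Fin n)) (m : ℕ), w' = shift m (permAct π w)

/-- Unoriented equivalence: `w` is orientedly equivalent to `w'` or to `rev(w')`. -/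
def UnorientedEquiv [NeZero n] (w w' : GaussCode n) : Prop :=
  OrientedEquiv w w' ∨ OrientedEquiv w (rev w')

/-- A Gauss code is 1-reducible if two cyclically adjacent entries share the same letter. -/
def OneReducible [NeZero n] (w : GaussCode n) : Prop :=
  ∃ i : Fin (2 * n), (w i).1 = (w (i + 1)).1

/-- A Gauss code is 2-reducible (cyclically, with `L = false`, `R = true`). -/
def TwoReducible [NeZero n] (w : GaussCode n) : Prop :=
  ∃ (i i' : Fin (2 * n)) (j k : Fin n), j ≠ k ∧
    ((w i = (j, false) ∧ w (i + 1) = (k, true) ∧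
        w i' = (j, true) ∧ w (i' + 1) = (k, false)) ∨
     (w i = (j, false) ∧ w (i + 1) = (k, true) ∧
        w i' = (k, false) ∧ w (i' + 1) = (j, true)) ∨
     (w i = (j, true) ∧ w (i + 1) = (k, false) ∧
        w i' = (k, true) ∧ w (i' + 1) = (j, false)))

/-- A Gauss code is minimal if it is neither 1-reducible nor 2-reducible. -/
def IsMinimal [NeZero n] (w : GaussCode n) : Prop :=
  ¬ OneReducible w ∧ ¬ TwoReducible w

/-- `σ_w`: the involution of positions sending each position to the unique other
position carrying the same letter. -/
def sigmaMap (w : GaussCode n) : Fin (2 * n) → Fin (2 * n) :=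
  fun i => w.symm ((w i).1, !(w i).2)

/-- `h_w`: the side (`false` = L, `true` = R) of the entry at each position. -/
def hMap (w : GaussCode n) : Fin (2 * n) → Bool :=
  fun i => (w i).2

end GaussCode

/-!
Relabelling letters does not change `proj^LP`, and rotating a code by one position either
leaves `proj^LP` unchanged (the entry rotated past is an `R`) or applies `shift^LP` to it (the
entry is an `L`, so it is the `(1,L)` of the projection). Hence the projections
of all rotations of `w` form exactly the `shift^LP`-orbit of `proj^LP(w)`, which gives the
oriented case; reversal commutes with oriented equivalence, which gives the unoriented one.
-/

theorem Tuple.sort_eq_of_strictMono_comp {α : Type*} [LinearOrder α] {m : ℕ} {f : Fin m → α}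
    {σ : Equiv.Perm (Fin m)} (h : StrictMono (f ∘ σ)) : Tuple.sort f = σ :=
  (Tuple.eq_sort_iff.2 ⟨h.monotone, fun _ _ hij hf => absurd hf (h hij).ne⟩).symm

theorem Fin.sub_one_lt_sub_one {m : ℕ} [NeZero m] {a b : Fin m} (ha : a ≠ 0) (hab : a < b) :
    a - 1 < b - 1 := by
  have hb : b ≠ 0 := (lt_of_le_of_lt (Fin.zero_le a) hab).ne'
  rw [Fin.lt_def, Fin.val_sub_one_of_ne_zero ha, Fin.val_sub_one_of_ne_zero hb]
  have : a.val ≠ 0 := Fin.val_ne_iff.2 ha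
  omega

namespace GaussCode

section

variable {n : ℕ}

@[simp]
lemma permAct_symm_apply (π : Equiv.Perm (Fin n)) (w : GaussCode n) (e : Fin n × Bool) :
    (permAct π w).symm e = w.symm (π⁻¹ e.1, e.2) := rfl

lemma permAct_permAct (π τ : Equiv.Perm (Fin n)) (w : GaussCode n) :
    permAct π (permAct τ w) = permAct (π * τ) w := rfl

@[simp]
lemma permAct_one (w : GaussCode n) : permAct 1 w = w := rfl

@[simp]
lemma rev_apply (w : GaussCode n) (i : Fin (2 * n)) : rev w i = w i.rev := rfl

@[simp]
lemma rev_rev (w : GaussCode n) : rev (rev w) = w := by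
  ext i : 1
  simp

lemma rev_permAct (π : Equiv.Perm (Fin n)) (w : GaussCode n) :
    rev (permAct π w) = permAct π (rev w) := rfl

def posL (w : GaussCode n) (j : Fin n) : Fin (2 * n) := w.symm (j, false)

lemma posL_injective (w : GaussCode n) : Function.Injective (posL w) := fun _ _ h => by
  simpa [posL] using h

lemma posL_permAct (π : Equiv.Perm (Fin n)) (w : GaussCode n) :
    posL (permAct π w) = posL w ∘ ⇑π⁻¹ := rfl

lemma strictMono_posL_comp_sort (w : GaussCode n) :
    StrictMono (posL w ∘ Tuple.sort (posL w)) :=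
  (Tuple.monotone_sort _).strictMono_of_injective
    ((posL_injective w).comp (Equiv.injective _))

end

variable {n : ℕ} [NeZero n]

open Fin.NatCast

@[simp]
lemma shift_apply (m : ℕ) (w : GaussCode n) (i : Fin (2 * n)) :
    shift m w i = w (i + m) := rfl

lemma posL_shift (m : ℕ) (w : GaussCode n) (j : Fin n) :
    posL (shift m w) j = posL w j - m := by
  simp [posL, shift, sub_eq_add_neg]

lemma shift_shift (a b : ℕ) (w : GaussCode n) : shift a (shift b w) = shift (a + b) w := by
  ext i : 1
  simp [add_assoc]

@[simp]
lemma shift_zero (w : GaussCode n) : shift 0 w = w := by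
  ext i : 1
  simp

lemma shift_permAct (m : ℕ) (π : Equiv.Perm (Fin n)) (w : GaussCode n) :
    shift m (permAct π w) = permAct π (shift m w) := rfl

lemma shift_congr {a b : ℕ} (h : (a : Fin (2 * n)) = b) (w : GaussCode n) :
    shift a w = shift b w := by
  rw [shift, h, shift]

lemma rev_shift (m : ℕ) (w : GaussCode n) :
    rev (shift m w) = shift (-(m : Fin (2 * n))).val (rev w) := by
  ext i : 1
  simp [Fin.rev_add]

def minPosL (w : GaussCode n) : Fin (2 * n) := posL w (Tuple.sort (posL w) 0)

lemma minPosL_le_posL (w : GaussCode n) (j : Fin n) : minPosL w ≤ posL w j := by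
  simpa [minPosL] using
    Tuple.monotone_sort (posL w) (Fin.zero_le ((Tuple.sort (posL w)).symm j))

lemma projLP_eq (w : GaussCode n) :
    projLP w = shift (minPosL w).val (permAct (Tuple.sort (posL w))⁻¹ w) := by
  simp only [projLP, permAct_symm_apply, inv_inv]
  rfl

lemma projLP_permAct (π : Equiv.Perm (Fin n)) (w : GaussCode n) :
    projLP (permAct π w) = projLP w := by
  have hsort : Tuple.sort (posL (permAct π w)) = π * Tuple.sort (posL w) := by
    apply Tuple.sort_eq_of_strictMono_comp
    simpa [posL_permAct, Function.comp_def] using strictMono_posL_comp_sort w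
  have hmin : minPosL (permAct π w) = minPosL w := by
    rw [minPosL, minPosL, hsort, posL_permAct]
    simp
  rw [projLP_eq, projLP_eq, hsort, hmin, permAct_permAct, mul_inv_rev, inv_mul_cancel_right]

lemma projLP_shift_one_of_snd_eq_true {w : GaussCode n} (h : (w 0).2 = true) :
    projLP (shift 1 w) = projLP w := by
  have hne : ∀ j, posL w j ≠ 0 := fun j hj => by
    simp [← hj, posL] at h
  have hsort : Tuple.sort (posL (shift 1 w)) = Tuple.sort (posL w) := by
    apply Tuple.sort_eq_of_strictMono_comp
    intro a b hab
    simpa [posL_shift] using Fin.sub_one_lt_sub_one (hne _) (strictMono_posL_comp_sort w hab)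
  have hmin : minPosL (shift 1 w) = minPosL w - 1 := by
    simp [minPosL, hsort, posL_shift]
  rw [projLP_eq, projLP_eq, hsort, hmin, ← shift_permAct, shift_shift]
  exact shift_congr (by simp) _

lemma shiftLP_projLP_of_snd_eq_false {w : GaussCode n} (h : (w 0).2 = false) :
    shiftLP (projLP w) = projLP (shift 1 w) := by
  have hmin : minPosL w = 0 := by
    refine le_antisymm ?_ (Fin.zero_le _)
    simpa [posL, ← h] using minPosL_le_posL w (w 0).1
  rw [shiftLP, projLP_eq w, hmin, Fin.val_zero, shift_zero, shift_permAct, projLP_permAct]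

lemma exists_projLP_shift_eq_iterate_shiftLP (w : GaussCode n) (m : ℕ) :
    ∃ k, projLP (shift m w) = shiftLP^[k] (projLP w) := by
  induction m with
  | zero => exact ⟨0, by simp⟩
  | succ m ih =>
    obtain ⟨k, hk⟩ := ih
    have hstep : shift (m + 1) w = shift 1 (shift m w) := by
      rw [shift_shift, Nat.add_comm]
    cases hside : (shift m w 0).2
    · refine ⟨k + 1, ?_⟩
      rw [hstep, ← shiftLP_projLP_of_snd_eq_false hside, hk, Function.iterate_succ_apply']
    · exact ⟨k, by rw [hstep, projLP_shift_one_of_snd_eq_true hside, hk]⟩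

lemma OrientedEquiv.symm {u v : GaussCode n} (h : OrientedEquiv u v) : OrientedEquiv v u := by
  obtain ⟨π, m, rfl⟩ := h
  refine ⟨π⁻¹, (-(m : Fin (2 * n))).val, ?_⟩
  simp only [shift_permAct, permAct_permAct, inv_mul_cancel, permAct_one, shift_shift]
  rw [shift_congr (b := 0) (by simp), shift_zero]

lemma OrientedEquiv.trans {u v x : GaussCode n} (h₁ : OrientedEquiv u v)
    (h₂ : OrientedEquiv v x) : OrientedEquiv u x := by
  obtain ⟨π, m, rfl⟩ := h₁
  obtain ⟨τ, m', rfl⟩ := h₂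
  exact ⟨τ * π, m' + m, by simp only [shift_shift, shift_permAct, permAct_permAct]⟩

lemma OrientedEquiv.rev {u v : GaussCode n} (h : OrientedEquiv u v) :
    OrientedEquiv (rev u) (rev v) := by
  obtain ⟨π, m, rfl⟩ := h
  exact ⟨π, (-(m : Fin (2 * n))).val, by rw [rev_shift, rev_permAct]⟩

lemma orientedEquiv_rev_left_iff {u v : GaussCode n} :
    OrientedEquiv (rev u) v ↔ OrientedEquiv u (rev v) :=
  ⟨fun h => by simpa using h.rev, fun h => by simpa using h.rev⟩

lemma orientedEquiv_projLP (w : GaussCode n) : OrientedEquiv w (projLP w) :=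
  ⟨_, _, projLP_eq w⟩

lemma orientedEquiv_projLP_left_iff {u v : GaussCode n} :
    OrientedEquiv (projLP u) v ↔ OrientedEquiv u v :=
  ⟨(orientedEquiv_projLP u).trans, (orientedEquiv_projLP u).symm.trans⟩

lemma orientedEquiv_shift (m : ℕ) (w : GaussCode n) : OrientedEquiv w (shift m w) :=
  ⟨1, m, by rw [permAct_one]⟩

lemma orientedEquiv_iterate_shiftLP (w : GaussCode n) (k : ℕ) :
    OrientedEquiv w (shiftLP^[k] w) := by
  induction k with
  | zero => simpa using orientedEquiv_shift 0 w
  | succ k ih =>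
    rw [Function.iterate_succ_apply']
    exact ih.trans ((orientedEquiv_shift 1 _).trans (orientedEquiv_projLP _))

theorem orientedEquiv_iff_exists_projLP_eq_iterate_shiftLP {u v : GaussCode n} :
    OrientedEquiv u v ↔ ∃ k, projLP v = shiftLP^[k] (projLP u) := by
  constructor
  · rintro ⟨π, m, rfl⟩
    rw [shift_permAct, projLP_permAct]
    exact exists_projLP_shift_eq_iterate_shiftLP u m
  · rintro ⟨k, hk⟩
    have h : OrientedEquiv u (projLP v) :=
      hk ▸ (orientedEquiv_projLP u).trans (orientedEquiv_iterate_shiftLP _ k)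
    exact h.trans (orientedEquiv_projLP v).symm

end GaussCode

open GaussCode in
/-- two Gauss codes are unorientedly equivalent iff the left preferred
projection of one lies in the `shift^LP`-orbit of the projection of the other or of
its `rev^LP`. -/
theorem stmt7 (n : ℕ) [NeZero n] (w w' : GaussCode n) :
    UnorientedEquiv w w' ↔
      ∃ k : ℕ, projLP w' = shiftLP^[k] (projLP w) ∨
        projLP w' = shiftLP^[k] (revLP (projLP w)) := by
  rw [exists_or, revLP, ← orientedEquiv_iff_exists_projLP_eq_iterate_shiftLP,
    ← orientedEquiv_iff_exists_projLP_eq_iterate_shiftLP, orientedEquiv_rev_left_iff,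
    orientedEquiv_projLP_left_iff, UnorientedEquiv]
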